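/- (Ward's divisibility test, one direction) Let v_1, ..., v_{k+2} be binary vectors in GF(2)^n such that for every 1 ≤ j ≤ k+2 and every choice of j distinct indices i_1 < ... < i_j, the Hamming weight of the componentwise product v_{i_1}·...·v_{i_j} is divisible by 2^{k+2-j}. Then every vector in the GF(2)-span of v_1, ..., v_{k+2} has Hamming weight divisible by 2^{k+1}. -/

import Mathlib

/-!
Over `GF(2)`, `wt (x + y) + 2 wt (x * y) = wt x + wt y`. Adding the generators one at a time,
the weight of `v a + ∑_{i ∈ T} v i` is governed by `wt (v a)`, `wt (∑_{i ∈ T} v i)` and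
`2 wt (∑_{i ∈ T} v a * v i)`. As `v a` is idempotent, the products of the family `(v a * v i)_{i ∈ T}`
are products of the original generators with one more factor, so this family satisfies the
hypothesis with an exponent one smaller; induction on the exponent finishes the proof.
-/

open Finset

/-- The Hamming weight of a vector over `ZMod 2`. -/
def hamWt {n : ℕ} (v : Fin n → ZMod 2) : ℕ :=
  (Finset.univ.filter (fun i => v i ≠ 0)).card

lemma hamWt_eq_sum_val {n : ℕ} (w : Fin n → ZMod 2) : hamWt w = ∑ i, (w i).val := by
  rw [hamWt, card_filter]
  refine sum_congr rfl fun i _ => ?_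
  generalize w i = a
  revert a
  decide

lemma hamWt_add_add_two_mul_hamWt_mul {n : ℕ} (x y : Fin n → ZMod 2) :
    hamWt (x + y) + 2 * hamWt (x * y) = hamWt x + hamWt y := by
  simp only [hamWt_eq_sum_val, mul_sum, ← sum_add_distrib]
  refine sum_congr rfl fun i _ => ?_
  simp only [Pi.add_apply, Pi.mul_apply]
  generalize x i = a
  generalize y i = b
  revert a b
  decide

lemma isIdempotentElem_pi_zmod_two {ι : Type*} (x : ι → ZMod 2) : IsIdempotentElem x := by
  funext i
  show x i * x i = x i
  generalize x i = a
  revert a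
  decide

lemma prod_mul_left_of_isIdempotentElem {ι M : Type*} [CommMonoid M] {x : M}
    (hx : IsIdempotentElem x) (f : ι → M) {S : Finset ι} (hS : S.Nonempty) :
    ∏ i ∈ S, x * f i = x * ∏ i ∈ S, f i := by
  rw [prod_mul_distrib, prod_const, hx.pow_eq hS.card_pos.ne']

theorem two_pow_dvd_hamWt_sum {ι : Type*} [DecidableEq ι] {n : ℕ} (m : ℕ)
    (v : ι → Fin n → ZMod 2) (T : Finset ι)
    (h : ∀ S ⊆ T, S.Nonempty → 2 ^ (m + 1 - #S) ∣ hamWt (∏ i ∈ S, v i)) :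
    2 ^ m ∣ hamWt (∑ i ∈ T, v i) := by
  induction m generalizing v T with
  | zero => simp
  | succ m ihm =>
    induction T using Finset.induction_on with
    | empty => simp [hamWt]
    | insert a T ha ihT =>
      have hva : 2 ^ (m + 1) ∣ hamWt (v a) := by
        simpa using h {a} (by simp) (by simp)
      have hsum : 2 ^ (m + 1) ∣ hamWt (∑ i ∈ T, v i) :=
        ihT fun S hS => h S (hS.trans (subset_insert a T))
      have hmul : 2 ^ m ∣ hamWt (v a * ∑ i ∈ T, v i) := by
        rw [mul_sum]
        refine ihm _ T fun S hS hne => ?_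
        have haS : a ∉ S := fun haS => ha (hS haS)
        have := h (insert a S) (insert_subset_insert a hS) (insert_nonempty a S)
        rwa [prod_insert haS, card_insert_of_notMem haS, Nat.add_sub_add_right,
          ← prod_mul_left_of_isIdempotentElem (isIdempotentElem_pi_zmod_two (v a)) v hne] at this
      have hmul₂ : 2 ^ (m + 1) ∣ 2 * hamWt (v a * ∑ i ∈ T, v i) := by
        rw [pow_succ']
        exact mul_dvd_mul_left 2 hmul
      rw [sum_insert ha, ← Nat.dvd_add_left hmul₂, hamWt_add_add_two_mul_hamWt_mul]
      exact dvd_add hva hsum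

lemma exists_finset_eq_sum_of_mem_span_range {ι M : Type*} [Fintype ι] [AddCommGroup M]
    [Module (ZMod 2) M] {v : ι → M} {w : M} (hw : w ∈ Submodule.span (ZMod 2) (Set.range v)) :
    ∃ T : Finset ι, w = ∑ i ∈ T, v i := by
  classical
  obtain ⟨c, rfl⟩ := (Submodule.mem_span_range_iff_exists_fun _).mp hw
  refine ⟨univ.filter (c · = 1), ?_⟩
  rw [sum_filter]
  refine sum_congr rfl fun i _ => ?_
  have hc : c i = 0 ∨ c i = 1 := by
    generalize c i = a
    revert a
    decide
  rcases hc with hc | hc <;> simp [hc]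

/-- Ward's divisibility test (sufficiency direction): if the componentwise
products of every `j` distinct generators have weight divisible by
`2^(k+2-j)`, then every codeword in the span has weight divisible by
`2^(k+1)`. -/
theorem wards_divisibility_test (k n : ℕ) (v : Fin (k + 2) → (Fin n → ZMod 2))
    (h : ∀ S : Finset (Fin (k + 2)), S.Nonempty →
      2 ^ (k + 2 - S.card) ∣ hamWt (∏ i ∈ S, v i)) :
    ∀ w ∈ Submodule.span (ZMod 2) (Set.range v), 2 ^ (k + 1) ∣ hamWt w := by
  intro w hw
  obtain ⟨T, rfl⟩ := exists_finset_eq_sum_of_mem_span_range hw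
  exact two_pow_dvd_hamWt_sum (k + 1) v T fun S _ hS => h S hS
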